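/- Bounds on the Partial Allocation fractions (Theorem 4.1, part on y_i): Let (f_1,…,f_n) be a profile of piecewise constant value density functions on [0,1], let A be an MNW allocation for the n agents, and for an agent i let A^i be an MNW allocation of the whole cake [0,1] among the n − 1 agents other than i (with respect to (f_j)_{j≠i}). Then ∏_{j≠i} v_j(A_j) ≤ ∏_{j≠i} v_j(A^i_j) ≤ e · ∏_{j≠i} v_j(A_j); equivalently, the fraction y_i = (∏_{j≠i} v_j(A_j)) / (∏_{j≠i} v_j(A^i_j)) satisfies 1/e ≤ y_i ≤ 1. -/

import Mathlib

/-
The lower bound holds because `A` with agent `i`'s piece removed is an allocation among the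
other agents. For the upper bound, an MNW allocation is a market equilibrium: every agent has
positive value, unallocated cake is worthless to everyone, and moving small pieces of `S ⊆ A k`
from `k` to `j` gives the first-order condition `v_j(S) v_k(A_k) ≤ v_k(S) v_j(A_j)`. So if a
piece `S ⊆ A k` is priced at `v_k(S) / v_k(A_k)`, every agent `j` gets at most `v_j(A_j)` per
unit of price, whence `v_j(A^i_j) ≤ v_j(A_j) p_j` for the prices `p_j` of the pieces of `A^i`.
These prices sum to at most the total price of the cake, the number of agents, which is one more
than the number of factors; as `p ≤ exp (p - 1)`, their product is at most `e`.
-/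

open MeasureTheory Set

noncomputable def cakeval (f : ℝ → ℝ) (S : Set ℝ) : ℝ := ∫ x in S, f x

def PiecewiseConstant (f : ℝ → ℝ) : Prop :=
  ∃ (m : ℕ) (a : Fin (m + 1) → ℝ) (c : Fin m → ℝ),
    a 0 = 0 ∧ a (Fin.last m) = 1 ∧ Monotone a ∧
    ∀ t : Fin m, ∀ x ∈ Set.Ico (a t.castSucc) (a t.succ), f x = c t

def ValidDensity (f : ℝ → ℝ) : Prop :=
  PiecewiseConstant f ∧ (∀ x, 0 ≤ f x) ∧ 0 < cakeval f (Set.Icc 0 1)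

def FinUnionIcc (S : Set ℝ) : Prop :=
  ∃ (k : ℕ) (a b : Fin k → ℝ), S = ⋃ j, Set.Icc (a j) (b j)

def IsAllocOn {n : ℕ} (C : Set ℝ) (A : Fin n → Set ℝ) : Prop :=
  (∀ i, A i ⊆ C) ∧ (∀ i, FinUnionIcc (A i)) ∧
    Pairwise fun i j => volume (A i ∩ A j) = 0

def IsAlloc {n : ℕ} (A : Fin n → Set ℝ) : Prop := IsAllocOn (Set.Icc 0 1) A

def CompleteAlloc {n : ℕ} (A : Fin n → Set ℝ) : Prop := (⋃ i, A i) = Set.Icc (0 : ℝ) 1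

noncomputable def nashProd {n : ℕ} (f : Fin n → ℝ → ℝ) (A : Fin n → Set ℝ) : ℝ :=
  ∏ i, cakeval (f i) (A i)

def IsMNWOn {n : ℕ} (C : Set ℝ) (f : Fin n → ℝ → ℝ) (A : Fin n → Set ℝ) : Prop :=
  IsAllocOn C A ∧ ∀ B : Fin n → Set ℝ, IsAllocOn C B → nashProd f B ≤ nashProd f A

def IsMNW {n : ℕ} (f : Fin n → ℝ → ℝ) (A : Fin n → Set ℝ) : Prop :=
  IsMNWOn (Set.Icc 0 1) f A

def IsCompleteMNW {n : ℕ} (f : Fin n → ℝ → ℝ) (A : Fin n → Set ℝ) : Prop :=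
  IsAlloc A ∧ CompleteAlloc A ∧
    ∀ B : Fin n → Set ℝ, IsAlloc B → CompleteAlloc B → nashProd f B ≤ nashProd f A

/-- An MNW allocation of the whole cake among the agents other than `i`: agent `i`
receives nothing and the allocation maximizes the Nash product of the remaining
agents' values. -/
def IsMNWWithout {n : ℕ} (f : Fin n → ℝ → ℝ) (i : Fin n) (B : Fin n → Set ℝ) : Prop :=
  IsAlloc B ∧ B i = ∅ ∧
    ∀ B' : Fin n → Set ℝ, IsAlloc B' → B' i = ∅ →
      (∏ j ∈ Finset.univ.erase i, cakeval (f j) (B' j)) ≤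
        ∏ j ∈ Finset.univ.erase i, cakeval (f j) (B j)

lemma finUnionIcc_iUnion_Icc {ι : Type*} [Finite ι] (a b : ι → ℝ) :
    FinUnionIcc (⋃ j, Icc (a j) (b j)) := by
  obtain ⟨k, ⟨e⟩⟩ := Finite.exists_equiv_fin ι
  exact ⟨k, a ∘ e.symm, b ∘ e.symm,
    (e.symm.surjective.iUnion_comp fun j => Icc (a j) (b j)).symm⟩

lemma finUnionIcc_empty : FinUnionIcc (∅ : Set ℝ) := by
  simpa using finUnionIcc_iUnion_Icc (Fin.elim0 : Fin 0 → ℝ) Fin.elim0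

lemma finUnionIcc_Icc (a b : ℝ) : FinUnionIcc (Icc a b) := by
  simpa only [iUnion_const] using finUnionIcc_iUnion_Icc (fun _ : Unit => a) (fun _ => b)

lemma finUnionIcc_iUnion {ι : Type*} [Finite ι] {S : ι → Set ℝ}
    (hS : ∀ j, FinUnionIcc (S j)) : FinUnionIcc (⋃ j, S j) := by
  choose k a b hS using hS
  simpa only [iUnion_sigma, ← hS] using
    finUnionIcc_iUnion_Icc (fun p : Σ j, Fin (k j) => a p.1 p.2) (fun p => b p.1 p.2)

lemma FinUnionIcc.union {S T : Set ℝ} (hS : FinUnionIcc S) (hT : FinUnionIcc T) :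
    FinUnionIcc (S ∪ T) := by
  obtain ⟨k, a, b, rfl⟩ := hS
  obtain ⟨l, c, d, rfl⟩ := hT
  simpa only [iUnion_sum, Sum.elim_inl, Sum.elim_inr] using
    finUnionIcc_iUnion_Icc (Sum.elim a c) (Sum.elim b d)

lemma FinUnionIcc.inter {S T : Set ℝ} (hS : FinUnionIcc S) (hT : FinUnionIcc T) :
    FinUnionIcc (S ∩ T) := by
  obtain ⟨k, a, b, rfl⟩ := hS
  obtain ⟨l, c, d, rfl⟩ := hT
  simpa only [iUnion_prod', Icc_inter_Icc, iUnion_inter_iUnion] using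
    finUnionIcc_iUnion_Icc (fun p : Fin k × Fin l => a p.1 ⊔ c p.2) (fun p => b p.1 ⊓ d p.2)

lemma FinUnionIcc.inter_iInter {ι : Type*} [Fintype ι] {S : Set ℝ} {U : ι → Set ℝ}
    (hS : FinUnionIcc S) (hU : ∀ j, FinUnionIcc (U j)) : FinUnionIcc (S ∩ ⋂ j, U j) := by
  classical
  suffices ∀ s : Finset ι, FinUnionIcc (S ∩ ⋂ j ∈ s, U j) by simpa using this Finset.univ
  intro s
  induction s using Finset.induction_on with
  | empty => simpa using hS
  | insert j s _ ih =>
    rw [Finset.set_biInter_insert, inter_left_comm]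
    exact (hU j).inter ih

lemma FinUnionIcc.measurableSet {S : Set ℝ} (hS : FinUnionIcc S) : MeasurableSet S := by
  obtain ⟨k, a, b, rfl⟩ := hS
  exact MeasurableSet.iUnion fun _ => measurableSet_Icc

lemma FinUnionIcc.exists_compl {S : Set ℝ} (hS : FinUnionIcc S) :
    ∃ T, FinUnionIcc T ∧ T ⊆ Icc 0 1 ∧ Icc 0 1 \ S ⊆ T ∧ volume (S ∩ T) = 0 := by
  obtain ⟨k, a, b, rfl⟩ := hS
  refine ⟨Icc 0 1 ∩ ⋂ j, (Icc 0 (a j) ∪ Icc (b j) 1),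
    (finUnionIcc_Icc 0 1).inter_iInter fun j => (finUnionIcc_Icc _ _).union (finUnionIcc_Icc _ _),
    inter_subset_left, ?_, ?_⟩
  · rintro x ⟨hx, hxS⟩
    refine ⟨hx, mem_iInter.2 fun j => ?_⟩
    rcases lt_or_ge x (a j) with hxa | hax
    · exact Or.inl ⟨hx.1, hxa.le⟩
    · exact Or.inr ⟨(not_le.1 fun hxb => hxS (mem_iUnion.2 ⟨j, hax, hxb⟩)).le, hx.2⟩
  · refine measure_mono_null ?_ (((finite_range a).union (finite_range b)).measure_zero volume)
    rintro x ⟨hxS, -, hxT⟩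
    obtain ⟨j, hj⟩ := mem_iUnion.1 hxS
    rcases mem_iInter.1 hxT j with h | h
    · exact Or.inl ⟨j, le_antisymm hj.1 h.2⟩
    · exact Or.inr ⟨j, le_antisymm h.1 hj.2⟩

lemma volume_Icc_inter_Icc_of_le {a b c d : ℝ} (hbc : b ≤ c) :
    volume (Icc a b ∩ Icc c d) = 0 :=
  measure_mono_null (fun _ hx => le_antisymm hx.1.2 (hbc.trans hx.2.1)) (measure_singleton b)

section cakeval

variable {f : ℝ → ℝ} {S T X : Set ℝ}

lemma cakeval_nonneg (hf : ∀ x, 0 ≤ f x) (S : Set ℝ) : 0 ≤ cakeval f S :=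
  integral_nonneg hf

lemma cakeval_mono (hf : ∀ x, 0 ≤ f x) (hT : IntegrableOn f T) (hST : S ⊆ T) :
    cakeval f S ≤ cakeval f T :=
  setIntegral_mono_set hT (.of_forall hf) hST.eventuallyLE

lemma cakeval_union (hST : volume (S ∩ T) = 0) (hT : MeasurableSet T)
    (hfS : IntegrableOn f S) (hfT : IntegrableOn f T) :
    cakeval f (S ∪ T) = cakeval f S + cakeval f T :=
  setIntegral_union₀ hST hT.nullMeasurableSet hfS hfT

lemma cakeval_iUnion {ι : Type*} [Fintype ι] {S : ι → Set ℝ}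
    (hS : ∀ j, MeasurableSet (S j))
    (hd : Pairwise fun j l => volume (S j ∩ S l) = 0) (hf : IntegrableOn f (⋃ j, S j)) :
    cakeval f (⋃ j, S j) = ∑ j, cakeval f (S j) := by
  rw [cakeval, integral_iUnion_ae (fun j => (hS j).nullMeasurableSet) hd hf, tsum_fintype]
  rfl

lemma sum_cakeval_le {ι : Type*} [Fintype ι] {S : ι → Set ℝ} (hf : ∀ x, 0 ≤ f x)
    (hS : ∀ j, MeasurableSet (S j)) (hd : Pairwise fun j l => volume (S j ∩ S l) = 0)
    (hSX : ∀ j, S j ⊆ X) (hfX : IntegrableOn f X) :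
    ∑ j, cakeval f (S j) ≤ cakeval f X := by
  rw [← cakeval_iUnion hS hd (hfX.mono_set (iUnion_subset hSX))]
  exact cakeval_mono hf hfX (iUnion_subset hSX)

lemma cakeval_le_inter_add_of_diff_subset (hf : ∀ x, 0 ≤ f x) (hT : MeasurableSet T)
    (hfS : IntegrableOn f S) (hfX : IntegrableOn f X) (hSTX : S \ T ⊆ X) :
    cakeval f S ≤ cakeval f (S ∩ T) + cakeval f X := by
  rw [cakeval, ← integral_inter_add_sdiff hT hfS]
  exact add_le_add_right (cakeval_mono hf hfX hSTX) _

lemma cakeval_le_mul_volume {M : ℝ} (hS : volume S < ⊤) (hM : ∀ x ∈ S, |f x| ≤ M) :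
    cakeval f S ≤ M * volume.real S :=
  (le_abs_self _).trans (norm_setIntegral_le_of_norm_le_const (f := f) hS hM)

lemma cakeval_Icc_of_eqOn_Ico {u w c : ℝ} (huw : u ≤ w) (hfc : ∀ x ∈ Ico u w, f x = c) :
    cakeval f (Icc u w) = (w - u) * c := by
  rw [cakeval, ← setIntegral_congr_set Ico_ae_eq_Icc, setIntegral_congr_fun measurableSet_Ico hfc,
    setIntegral_const, smul_eq_mul, Real.volume_real_Ico_of_le huw]

end cakeval

lemma exists_mem_Ico_of_mem_Ico {α : Type*} [LinearOrder α] :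
    ∀ {m : ℕ} (a : Fin (m + 1) → α) {x : α}, a 0 ≤ x → x < a (Fin.last m) →
      ∃ t : Fin m, x ∈ Ico (a t.castSucc) (a t.succ)
  | 0, a, _, h0, h1 => absurd h1 (not_lt.2 h0)
  | m + 1, a, x, h0, h1 => by
    by_cases hx : x < a (Fin.last m).castSucc
    · obtain ⟨t, ht⟩ := exists_mem_Ico_of_mem_Ico (fun t => a t.castSucc) h0 hx
      exact ⟨t.castSucc, by rwa [Fin.succ_castSucc]⟩
    · exact ⟨Fin.last m, not_lt.1 hx, by simpa using h1⟩

section PiecewiseConstant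

variable {f : ℝ → ℝ}

lemma PiecewiseConstant.integrableOn_Icc (hf : PiecewiseConstant f) :
    IntegrableOn f (Icc 0 1) := by
  obtain ⟨m, a, c, h0, h1, -, hc⟩ := hf
  have hpieces : IntegrableOn f (⋃ t : Fin m, Ico (a t.castSucc) (a t.succ)) :=
    integrableOn_finite_iUnion.2 fun t =>
      IntegrableOn.congr_fun (integrableOn_const measure_Ico_lt_top.ne)
        (fun x hx => (hc t x hx).symm) measurableSet_Ico
  refine (hpieces.union ((integrableOn_singleton_iff (x := (1 : ℝ))).2
    (Or.inr measure_singleton_lt_top))).mono_set fun x hx => ?_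
  rcases hx.2.lt_or_eq with hx1 | rfl
  · exact Or.inl (mem_iUnion.2 (exists_mem_Ico_of_mem_Ico a (h0 ▸ hx.1) (h1 ▸ hx1)))
  · exact Or.inr rfl

lemma PiecewiseConstant.bddAbove_image_Icc (hf : PiecewiseConstant f) :
    BddAbove (f '' Icc 0 1) := by
  obtain ⟨m, a, c, h0, h1, -, hc⟩ := hf
  refine ((finite_range c).insert (f 1)).bddAbove.mono ?_
  rintro _ ⟨x, hx, rfl⟩
  rcases hx.2.lt_or_eq with hx1 | rfl
  · obtain ⟨t, ht⟩ := exists_mem_Ico_of_mem_Ico a (h0 ▸ hx.1) (h1 ▸ hx1)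
    exact Or.inr ⟨t, (hc t x ht).symm⟩
  · exact Or.inl rfl

lemma ValidDensity.exists_Ico_eq_const_pos (hf : ValidDensity f) :
    ∃ u w c, 0 ≤ u ∧ u < w ∧ w ≤ 1 ∧ 0 < c ∧ ∀ x ∈ Ico u w, f x = c := by
  obtain ⟨⟨m, a, c, h0, h1, hmono, hc⟩, hf0, hpos⟩ := hf
  obtain ⟨x, hx, hfx⟩ : ∃ x ∈ Ico (0 : ℝ) 1, 0 < f x := by
    by_contra! h
    have hzero : ∫ x in Ico (0 : ℝ) 1, f x = 0 :=
      setIntegral_eq_zero_of_forall_eq_zero fun x hx => le_antisymm (h x hx) (hf0 x)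
    rw [setIntegral_congr_set Ico_ae_eq_Icc] at hzero
    exact hpos.ne' hzero
  obtain ⟨t, ht⟩ := exists_mem_Ico_of_mem_Ico a (h0 ▸ hx.1) (h1 ▸ hx.2)
  exact ⟨a t.castSucc, a t.succ, c t, h0 ▸ hmono (Fin.zero_le _), ht.1.trans_lt ht.2,
    h1 ▸ hmono (Fin.le_last _), hc t x ht ▸ hfx, hc t⟩

lemma ValidDensity.integrableOn (hf : ValidDensity f) {S : Set ℝ} (hS : S ⊆ Icc 0 1) :
    IntegrableOn f S :=
  hf.1.integrableOn_Icc.mono_set hS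

end PiecewiseConstant

def gridCell (m r : ℕ) : Set ℝ := Icc ((r : ℝ) / m) ((r + 1) / m)

lemma Icc_subset_iUnion_gridCell {m : ℕ} (hm : 0 < m) :
    Icc (0 : ℝ) 1 ⊆ ⋃ r : Fin m, gridCell m r := by
  intro x hx
  have hm' : (0 : ℝ) < m := Nat.cast_pos.2 hm
  have hxm : 0 ≤ x * m := mul_nonneg hx.1 hm'.le
  refine mem_iUnion.2 ⟨⟨min ⌊x * m⌋₊ (m - 1), by omega⟩, ?_, ?_⟩
  · rw [div_le_iff₀ hm']
    exact (Nat.cast_le.2 (min_le_left _ _)).trans (Nat.floor_le hxm)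
  · rw [le_div_iff₀ hm']
    change x * m ≤ (min ⌊x * m⌋₊ (m - 1) : ℕ) + 1
    rcases le_total ⌊x * m⌋₊ (m - 1) with h | h
    · rw [min_eq_left h]
      exact (Nat.lt_floor_add_one _).le
    · rw [min_eq_right h, Nat.cast_pred hm, sub_add_cancel]
      exact mul_le_of_le_one_left hm'.le hx.2

lemma volume_gridCell_inter {m r r' : ℕ} (h : r ≠ r') :
    volume (gridCell m r ∩ gridCell m r') = 0 := by
  wlog hlt : r < r' generalizing r r'
  · rw [inter_comm]
    exact this h.symm ((not_lt.1 hlt).lt_of_ne h.symm)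
  exact volume_Icc_inter_Icc_of_le
    (div_le_div_of_nonneg_right (by exact_mod_cast Nat.succ_le_of_lt hlt) m.cast_nonneg)

lemma volume_real_gridCell (m r : ℕ) : volume.real (gridCell m r) = 1 / m := by
  rw [gridCell, Real.volume_real_Icc_of_le (div_le_div_of_nonneg_right (by linarith) m.cast_nonneg)]
  ring

lemma cakeval_eq_sum_inter_gridCell {f : ℝ → ℝ} {S : Set ℝ} {m : ℕ} (hm : 0 < m)
    (hS : MeasurableSet S) (hS1 : S ⊆ Icc 0 1) (hf : IntegrableOn f S) :
    cakeval f S = ∑ r : Fin m, cakeval f (S ∩ gridCell m r) := by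
  have hcover : S = ⋃ r : Fin m, S ∩ gridCell m r := by
    rw [← inter_iUnion]
    exact (inter_eq_left.2 (hS1.trans (Icc_subset_iUnion_gridCell hm))).symm
  calc cakeval f S = cakeval f (⋃ r : Fin m, S ∩ gridCell m r) := congrArg _ hcover
    _ = _ := cakeval_iUnion (fun _ => hS.inter measurableSet_Icc)
      (fun r r' h => measure_mono_null (inter_subset_inter inter_subset_right inter_subset_right)
        (volume_gridCell_inter (Fin.val_injective.ne h))) (hcover ▸ hf)

lemma prod_le_exp_sum_sub_card {ι : Type*} (s : Finset ι) {p : ι → ℝ}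
    (hp : ∀ j ∈ s, 0 ≤ p j) :
    ∏ j ∈ s, p j ≤ Real.exp (∑ j ∈ s, p j - s.card) := by
  calc ∏ j ∈ s, p j ≤ ∏ j ∈ s, Real.exp (p j - 1) :=
        Finset.prod_le_prod hp fun j _ => by linarith [Real.add_one_le_exp (p j - 1)]
    _ = _ := by rw [← Real.exp_sum, Finset.sum_sub_distrib]; simp

lemma exists_subintervals_pairwise_le {ι : Type*} [DecidableEq ι] (s : Finset ι)
    (u w : ι → ℝ) (huw : ∀ l ∈ s, u l < w l) :
    ∃ u' w' : ι → ℝ, (∀ l ∈ s, u l ≤ u' l ∧ u' l < w' l ∧ w' l ≤ w l) ∧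
      ∀ l ∈ s, ∀ l' ∈ s, l ≠ l' → w' l ≤ u' l' ∨ w' l' ≤ u' l := by
  induction s using Finset.induction_on_min_value w generalizing u with
  | empty => exact ⟨u, w, by simp, by simp⟩
  | insert l₀ s hl₀ hmin ih =>
    -- `l₀` has the leftmost right end: it keeps `[u l₀, mid]`, and the intervals of the
    -- others are cut to start after `mid`.
    obtain ⟨mid, humid, hmidw⟩ := exists_between (huw l₀ (Finset.mem_insert_self l₀ s))
    obtain ⟨u', w', hsub, hdisj⟩ := ih (fun l => max (u l) mid) fun l hl =>
      max_lt (huw l (Finset.mem_insert_of_mem hl)) (hmidw.trans_le (hmin l hl))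
    have hmid : ∀ l ∈ s, mid ≤ u' l := fun l hl => (le_max_right _ _).trans (hsub l hl).1
    refine ⟨Function.update u' l₀ (u l₀), Function.update w' l₀ mid, fun l hl => ?_,
      fun l hl l' hl' hll' => ?_⟩
    · rcases eq_or_ne l l₀ with rfl | hl₀'
      · simp only [Function.update_self]
        exact ⟨le_rfl, humid, hmidw.le⟩
      · have hls := (Finset.mem_insert.1 hl).resolve_left hl₀'
        simp only [Function.update_of_ne hl₀']
        exact ⟨(le_max_left _ _).trans (hsub l hls).1, (hsub l hls).2⟩
    · rcases eq_or_ne l l₀ with rfl | hl₀'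
      · simp only [Function.update_self, Function.update_of_ne hll'.symm]
        exact Or.inl (hmid l' ((Finset.mem_insert.1 hl').resolve_left hll'.symm))
      rcases eq_or_ne l' l₀ with rfl | hl₀''
      · simp only [Function.update_self, Function.update_of_ne hll']
        exact Or.inr (hmid l ((Finset.mem_insert.1 hl).resolve_left hll'))
      simp only [Function.update_of_ne hl₀', Function.update_of_ne hl₀'']
      exact hdisj l ((Finset.mem_insert.1 hl).resolve_left hl₀') l'
        ((Finset.mem_insert.1 hl').resolve_left hl₀'') hll'

section Allocation

variable {n : ℕ} {f : Fin n → ℝ → ℝ} {A B : Fin n → Set ℝ}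

lemma IsAllocOn.update {C : Set ℝ} (hA : IsAllocOn C A) {j : Fin n} {S : Set ℝ}
    (hSC : S ⊆ C) (hS : FinUnionIcc S) (hSA : ∀ l ≠ j, volume (S ∩ A l) = 0) :
    IsAllocOn C (Function.update A j S) := by
  refine ⟨fun l => ?_, fun l => ?_, fun l l' hll' => ?_⟩ <;>
    simp only [Function.update_apply]
  · split_ifs
    exacts [hSC, hA.1 l]
  · split_ifs
    exacts [hS, hA.2.1 l]
  · split_ifs with hl hl'
    · exact absurd (hl.trans hl'.symm) hll'
    · exact hSA l' hl'
    · rw [inter_comm]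
      exact hSA l hl
    · exact hA.2.2 hll'

lemma IsAllocOn.update_of_subset {C : Set ℝ} (hA : IsAllocOn C A) {j : Fin n} {S : Set ℝ}
    (hSA : S ⊆ A j) (hS : FinUnionIcc S) : IsAllocOn C (Function.update A j S) :=
  hA.update (hSA.trans (hA.1 j)) hS fun _ hl =>
    measure_mono_null (inter_subset_inter_left _ hSA) (hA.2.2 hl.symm)

lemma IsMNWWithout.prod_le {i : Fin n} (hAi : IsMNWWithout f i A) (hB : IsAlloc B) :
    ∏ j ∈ Finset.univ.erase i, cakeval (f j) (B j) ≤
      ∏ j ∈ Finset.univ.erase i, cakeval (f j) (A j) := by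
  have hB' : IsAlloc (Function.update B i ∅) :=
    hB.update (empty_subset _) finUnionIcc_empty fun _ _ => by simp
  calc ∏ j ∈ Finset.univ.erase i, cakeval (f j) (B j)
      = ∏ j ∈ Finset.univ.erase i, cakeval (f j) (Function.update B i ∅ j) :=
        Finset.prod_congr rfl fun j hj => by rw [Function.update_of_ne (Finset.ne_of_mem_erase hj)]
    _ ≤ _ := hAi.2.2 _ hB' (Function.update_self ..)

lemma IsMNW.cakeval_pos (hf : ∀ j, ValidDensity (f j)) (hA : IsMNW f A) (j : Fin n) :
    0 < cakeval (f j) (A j) := by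
  choose u w c hu huw hw hc hfc using fun l => (hf l).exists_Ico_eq_const_pos
  obtain ⟨u', w', hsub, hdisj⟩ :=
    exists_subintervals_pairwise_le Finset.univ u w fun l _ => huw l
  have hB : IsAlloc fun l => Icc (u' l) (w' l) := by
    refine ⟨fun l => Icc_subset_Icc ((hu l).trans (hsub l (Finset.mem_univ l)).1)
      ((hsub l (Finset.mem_univ l)).2.2.trans (hw l)), fun l => finUnionIcc_Icc _ _,
      fun l l' hll' => ?_⟩
    rcases hdisj l (Finset.mem_univ l) l' (Finset.mem_univ l') hll' with h | h
    · exact volume_Icc_inter_Icc_of_le h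
    · rw [inter_comm]
      exact volume_Icc_inter_Icc_of_le h
  have hBpos : 0 < nashProd f fun l => Icc (u' l) (w' l) := by
    refine Finset.prod_pos fun l _ => ?_
    obtain ⟨hul, huwl, hwl⟩ := hsub l (Finset.mem_univ l)
    rw [cakeval_Icc_of_eqOn_Ico huwl.le fun x hx => hfc l x ⟨hul.trans hx.1, hx.2.trans_le hwl⟩]
    exact mul_pos (sub_pos.2 huwl) (hc l)
  refine (cakeval_nonneg (hf j).2.1 _).lt_of_ne fun hj => ?_
  exact (hBpos.trans_le (hA.2 _ hB)).ne' (Finset.prod_eq_zero (Finset.mem_univ j) hj.symm)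

lemma IsMNW.prod_le_of_eq_off (hf : ∀ j, ValidDensity (f j)) (hA : IsMNW f A) (hB : IsAlloc B)
    (s : Finset (Fin n)) (hBA : ∀ l ∉ s, B l = A l) :
    ∏ l ∈ s, cakeval (f l) (B l) ≤ ∏ l ∈ s, cakeval (f l) (A l) := by
  have hle := hA.2 B hB
  have hcompl : ∏ l ∈ sᶜ, cakeval (f l) (B l) = ∏ l ∈ sᶜ, cakeval (f l) (A l) :=
    Finset.prod_congr rfl fun l hl => by rw [hBA l (Finset.mem_compl.1 hl)]
  rw [nashProd, nashProd, ← Finset.prod_mul_prod_compl s, hcompl,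
    ← Finset.prod_mul_prod_compl s fun l => cakeval (f l) (A l)] at hle
  exact le_of_mul_le_mul_right hle (Finset.prod_pos fun l _ => hA.cakeval_pos hf l)

lemma IsMNW.cakeval_diff_iUnion_eq_zero (hf : ∀ j, ValidDensity (f j)) (hA : IsMNW f A)
    (j : Fin n) : cakeval (f j) (Icc 0 1 \ ⋃ l, A l) = 0 := by
  obtain ⟨hA1, hAfin, hAdisj⟩ := hA.1
  obtain ⟨T, hT, hT1, hcovT, hTnull⟩ := (finUnionIcc_iUnion hAfin).exists_compl
  have hTA : ∀ l, volume (T ∩ A l) = 0 := fun l => by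
    refine measure_mono_null (fun x hx => ?_) hTnull
    exact ⟨mem_iUnion.2 ⟨l, hx.2⟩, hx.1⟩
  have hB : IsAlloc (Function.update A j (A j ∪ T)) :=
    hA.1.update (union_subset (hA1 j) hT1) ((hAfin j).union hT) fun l hl => by
      rw [union_inter_distrib_right]
      exact measure_union_null (hAdisj hl.symm) (hTA l)
  have hle := hA.prod_le_of_eq_off hf hB {j} fun l hl =>
    Function.update_of_ne (Finset.notMem_singleton.1 hl) _ _
  rw [Finset.prod_singleton, Finset.prod_singleton, Function.update_self,
    cakeval_union (by rw [inter_comm]; exact hTA j) hT.measurableSet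
      ((hf j).integrableOn (hA1 j)) ((hf j).integrableOn hT1)] at hle
  refine le_antisymm ((cakeval_mono (hf j).2.1 ((hf j).integrableOn hT1) hcovT).trans ?_)
    (cakeval_nonneg (hf j).2.1 _)
  linarith

lemma IsAllocOn.transfer {C : Set ℝ} (hA : IsAllocOn C A) {j k : Fin n} {P T : Set ℝ}
    (hP : FinUnionIcc P) (hT : FinUnionIcc T) (hPk : P ⊆ A k) (hPT : volume (P ∩ T) = 0) :
    IsAllocOn C (Function.update (Function.update A k (A k ∩ T)) j (A j ∪ P)) := by
  obtain ⟨hAC, hAfin, hAdisj⟩ := id hA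
  set A' := Function.update A k (A k ∩ T)
  have hA'A : ∀ l, A' l ⊆ A l := fun l => by
    rcases eq_or_ne l k with rfl | hl
    · simp only [A', Function.update_self, inter_subset_left]
    · simp only [A', Function.update_of_ne hl, subset_rfl]
  refine (hA.update_of_subset inter_subset_left ((hAfin k).inter hT)).update
    (union_subset (hAC j) (hPk.trans (hAC k))) ((hAfin j).union hP) fun l hl => ?_
  rw [union_inter_distrib_right]
  refine measure_union_null
    (measure_mono_null (inter_subset_inter_right _ (hA'A l)) (hAdisj hl.symm)) ?_
  rcases eq_or_ne l k with rfl | hlk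
  · refine measure_mono_null (fun x hx => ?_) hPT
    simp only [Function.update_self] at hx
    exact ⟨hx.1, hx.2.2⟩
  · refine measure_mono_null (fun x hx => ?_) (hAdisj hlk.symm)
    simp only [Function.update_of_ne hlk] at hx
    exact ⟨hPk hx.1, hx.2⟩

-- Moving `P` from agent `k` to agent `j` does not increase the Nash product:
-- `(a + x) (b - y) ≤ a b` rearranged.
lemma IsMNW.exchange (hf : ∀ j, ValidDensity (f j)) (hA : IsMNW f A) {j k : Fin n}
    (hjk : j ≠ k) {P : Set ℝ} (hP : FinUnionIcc P) (hPk : P ⊆ A k) :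
    cakeval (f j) P * cakeval (f k) (A k) ≤
      cakeval (f k) P * (cakeval (f j) (A j) + cakeval (f j) P) := by
  obtain ⟨hA1, -, hAdisj⟩ := hA.1
  obtain ⟨T, hT, -, hcovT, hPT⟩ := hP.exists_compl
  have hP1 : P ⊆ Icc 0 1 := hPk.trans (hA1 k)
  have hle := hA.prod_le_of_eq_off hf (hA.1.transfer hP hT hPk hPT) {j, k} fun l hl => by
    simp only [Finset.mem_insert, Finset.mem_singleton, not_or] at hl
    rw [Function.update_of_ne hl.1, Function.update_of_ne hl.2]
  rw [Finset.prod_pair hjk, Finset.prod_pair hjk, Function.update_self,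
    Function.update_of_ne hjk.symm, Function.update_self,
    cakeval_union (measure_mono_null (inter_subset_inter_right _ hPk) (hAdisj hjk))
      hP.measurableSet ((hf j).integrableOn (hA1 j)) ((hf j).integrableOn hP1)] at hle
  have hk : cakeval (f k) (A k) ≤ cakeval (f k) (A k ∩ T) + cakeval (f k) P :=
    cakeval_le_inter_add_of_diff_subset (hf k).2.1 hT.measurableSet
      ((hf k).integrableOn (hA1 k)) ((hf k).integrableOn hP1)
      fun x hx => by_contra fun hxP => hx.2 (hcovT ⟨hA1 k hx.1, hxP⟩)
  have hgain := mul_le_mul_of_nonneg_left (sub_le_iff_le_add.2 hk)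
    (add_nonneg (cakeval_nonneg (hf j).2.1 (A j)) (cakeval_nonneg (hf j).2.1 P))
  nlinarith

-- Exchange the parts of `S` cell by cell in a grid of mesh `1 / m`.
lemma IsMNW.cakeval_mul_le_mul_add_div (hf : ∀ j, ValidDensity (f j)) (hA : IsMNW f A)
    {j k : Fin n} (hjk : j ≠ k) {S : Set ℝ} (hS : FinUnionIcc S) (hSk : S ⊆ A k) {M : ℝ}
    (hM : ∀ x ∈ Icc (0 : ℝ) 1, f k x ≤ M) {m : ℕ} (hm : 1 ≤ m) :
    cakeval (f j) S * cakeval (f k) (A k) ≤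
      cakeval (f k) S * cakeval (f j) (A j) + cakeval (f j) S * (M / m) := by
  have hS1 : S ⊆ Icc 0 1 := hSk.trans (hA.1.1 k)
  have hsum : ∀ l, cakeval (f l) S = ∑ r : Fin m, cakeval (f l) (S ∩ gridCell m r) := fun l =>
    cakeval_eq_sum_inter_gridCell hm hS.measurableSet hS1 ((hf l).integrableOn hS1)
  have hsmall : ∀ r : Fin m, cakeval (f k) (S ∩ gridCell m r) ≤ M / m := fun r => by
    calc cakeval (f k) (S ∩ gridCell m r) ≤ M * volume.real (S ∩ gridCell m r) :=
          cakeval_le_mul_volume ((measure_mono inter_subset_right).trans_lt measure_Icc_lt_top)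
            fun x hx => (abs_of_nonneg ((hf k).2.1 x)).trans_le (hM x (hS1 hx.1))
      _ ≤ M * (1 / m) := mul_le_mul_of_nonneg_left
          ((measureReal_mono inter_subset_right measure_Icc_lt_top.ne).trans_eq
            (volume_real_gridCell m r)) (((hf k).2.1 0).trans (hM 0 ⟨le_rfl, zero_le_one⟩))
      _ = M / m := mul_one_div M m
  calc cakeval (f j) S * cakeval (f k) (A k)
      = ∑ r : Fin m, cakeval (f j) (S ∩ gridCell m r) * cakeval (f k) (A k) := by
        rw [hsum j, Finset.sum_mul]
    _ ≤ ∑ r : Fin m, cakeval (f k) (S ∩ gridCell m r) *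
          (cakeval (f j) (A j) + cakeval (f j) (S ∩ gridCell m r)) :=
        Finset.sum_le_sum fun r _ => hA.exchange hf hjk (hS.inter (finUnionIcc_Icc _ _))
          (inter_subset_left.trans hSk)
    _ ≤ ∑ r : Fin m, (cakeval (f k) (S ∩ gridCell m r) * cakeval (f j) (A j) +
          cakeval (f j) (S ∩ gridCell m r) * (M / m)) :=
        Finset.sum_le_sum fun r _ => by
          nlinarith [hsmall r, cakeval_nonneg (hf j).2.1 (S ∩ gridCell m r)]
    _ = cakeval (f k) S * cakeval (f j) (A j) + cakeval (f j) S * (M / m) := by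
        rw [Finset.sum_add_distrib, ← Finset.sum_mul, ← Finset.sum_mul, ← hsum, ← hsum]

lemma IsMNW.cakeval_mul_le_mul (hf : ∀ j, ValidDensity (f j)) (hA : IsMNW f A) {j k : Fin n}
    (hjk : j ≠ k) {S : Set ℝ} (hS : FinUnionIcc S) (hSk : S ⊆ A k) :
    cakeval (f j) S * cakeval (f k) (A k) ≤ cakeval (f k) S * cakeval (f j) (A j) := by
  obtain ⟨M, hM⟩ := (hf k).1.bddAbove_image_Icc
  have hlim : Filter.Tendsto (fun m : ℕ => cakeval (f k) S * cakeval (f j) (A j) +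
      cakeval (f j) S * (M / m)) Filter.atTop
      (nhds (cakeval (f k) S * cakeval (f j) (A j))) := by
    simpa using tendsto_const_nhds.add
      (tendsto_const_nhds.mul (tendsto_const_div_atTop_nhds_zero_nat M))
  exact ge_of_tendsto hlim (Filter.eventually_atTop.2 ⟨1, fun m hm =>
    hA.cakeval_mul_le_mul_add_div hf hjk hS hSk (fun x hx => hM (mem_image_of_mem _ hx)) hm⟩)

end Allocation

/-- The price of `X` at the market equilibrium given by `A`: each agent `k` spends a budget of
`1` on `A k`, and the price density on `A k` is proportional to `f k`. -/
noncomputable def price {n : ℕ} (f : Fin n → ℝ → ℝ) (A : Fin n → Set ℝ) (X : Set ℝ) : ℝ :=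
  ∑ k, cakeval (f k) (X ∩ A k) / cakeval (f k) (A k)

section Price

variable {n : ℕ} {f : Fin n → ℝ → ℝ} {A : Fin n → Set ℝ}

lemma price_nonneg (hf : ∀ k x, 0 ≤ f k x) (X : Set ℝ) : 0 ≤ price f A X :=
  Finset.sum_nonneg fun k _ => div_nonneg (cakeval_nonneg (hf k) _) (cakeval_nonneg (hf k) _)

lemma IsMNW.cakeval_le_mul_price (hf : ∀ j, ValidDensity (f j)) (hA : IsMNW f A) {X : Set ℝ}
    (hX : FinUnionIcc X) (hX1 : X ⊆ Icc 0 1) (j : Fin n) :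
    cakeval (f j) X ≤ cakeval (f j) (A j) * price f A X := by
  obtain ⟨hA1, hAfin, hAdisj⟩ := hA.1
  have hterm : ∀ k, cakeval (f j) (X ∩ A k) ≤
      cakeval (f j) (A j) * (cakeval (f k) (X ∩ A k) / cakeval (f k) (A k)) := fun k => by
    rcases eq_or_ne j k with rfl | hjk
    · rw [mul_div_cancel₀ _ (hA.cakeval_pos hf j).ne']
    · rw [← mul_div_assoc, le_div_iff₀ (hA.cakeval_pos hf k), mul_comm (cakeval (f j) (A j))]
      exact hA.cakeval_mul_le_mul hf hjk (hX.inter (hAfin k)) inter_subset_right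
  calc cakeval (f j) X
      ≤ cakeval (f j) (X ∩ ⋃ k, A k) + cakeval (f j) (Icc 0 1 \ ⋃ k, A k) :=
        cakeval_le_inter_add_of_diff_subset (hf j).2.1
          (MeasurableSet.iUnion fun k => (hAfin k).measurableSet) ((hf j).integrableOn hX1)
          ((hf j).integrableOn sdiff_subset) (sdiff_subset_sdiff_left hX1)
    _ = ∑ k, cakeval (f j) (X ∩ A k) := by
        rw [hA.cakeval_diff_iUnion_eq_zero hf j, add_zero, inter_iUnion]
        exact cakeval_iUnion (fun k => hX.measurableSet.inter (hAfin k).measurableSet)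
          (fun k l hkl => measure_mono_null
            (inter_subset_inter inter_subset_right inter_subset_right) (hAdisj hkl))
          ((hf j).integrableOn (iUnion_subset fun k => inter_subset_left.trans hX1))
    _ ≤ ∑ k, cakeval (f j) (A j) * (cakeval (f k) (X ∩ A k) / cakeval (f k) (A k)) :=
        Finset.sum_le_sum fun k _ => hterm k
    _ = cakeval (f j) (A j) * price f A X := (Finset.mul_sum ..).symm

lemma sum_price_le (hf : ∀ k, ValidDensity (f k)) (hA : IsAlloc A) {m : ℕ}
    {B : Fin m → Set ℝ} (hB : IsAlloc B) : ∑ j, price f A (B j) ≤ n := by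
  simp only [price]
  rw [Finset.sum_comm]
  calc ∑ k, ∑ j, cakeval (f k) (B j ∩ A k) / cakeval (f k) (A k)
      ≤ ∑ _k : Fin n, (1 : ℝ) :=
        Finset.sum_le_sum fun k _ => by
          rw [← Finset.sum_div]
          refine div_le_one_of_le₀ ?_ (cakeval_nonneg (hf k).2.1 _)
          exact sum_cakeval_le (hf k).2.1 (fun j => ((hB.2.1 j).inter (hA.2.1 k)).measurableSet)
            (fun j l hjl => measure_mono_null
              (inter_subset_inter inter_subset_left inter_subset_left) (hB.2.2 hjl))
            (fun j => inter_subset_right) ((hf k).integrableOn (hA.1 k))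
    _ = n := by simp

lemma IsMNW.prod_le_exp_mul_prod (hf : ∀ j, ValidDensity (f j)) (hA : IsMNW f A)
    {B : Fin n → Set ℝ} (hB : IsAlloc B) (s : Finset (Fin n)) :
    ∏ j ∈ s, cakeval (f j) (B j) ≤
      Real.exp (n - s.card) * ∏ j ∈ s, cakeval (f j) (A j) := by
  have hf0 : ∀ k x, 0 ≤ f k x := fun k => (hf k).2.1
  have hprice : ∏ j ∈ s, price f A (B j) ≤ Real.exp (n - s.card) := by
    refine (prod_le_exp_sum_sub_card s fun j _ => price_nonneg hf0 _).trans
      (Real.exp_le_exp.2 (sub_le_sub_right ?_ _))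
    exact (Finset.sum_le_univ_sum_of_nonneg fun j => price_nonneg hf0 _).trans
      (sum_price_le hf hA.1 hB)
  calc ∏ j ∈ s, cakeval (f j) (B j) ≤ ∏ j ∈ s, cakeval (f j) (A j) * price f A (B j) :=
        Finset.prod_le_prod (fun j _ => cakeval_nonneg (hf0 j) _)
          fun j _ => hA.cakeval_le_mul_price hf (hB.2.1 j) (hB.1 j) j
    _ = (∏ j ∈ s, cakeval (f j) (A j)) * ∏ j ∈ s, price f A (B j) := Finset.prod_mul_distrib
    _ ≤ (∏ j ∈ s, cakeval (f j) (A j)) * Real.exp (n - s.card) :=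
        mul_le_mul_of_nonneg_left hprice (Finset.prod_nonneg fun j _ => cakeval_nonneg (hf0 j) _)
    _ = _ := mul_comm _ _

end Price

/-- Bounds on the Partial Allocation fractions (Theorem 4.1): if `A` is an MNW
allocation for all `n` agents and `A^i` is an MNW allocation of the whole cake among
the agents other than `i`, then
`∏_{j≠i} v_j(A_j) ≤ ∏_{j≠i} v_j(A^i_j) ≤ e · ∏_{j≠i} v_j(A_j)`;
equivalently the fraction `y_i = (∏_{j≠i} v_j(A_j)) / (∏_{j≠i} v_j(A^i_j))`
satisfies `1/e ≤ y_i ≤ 1`. -/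
theorem pa_fraction_bounds (n : ℕ) (f : Fin (n + 1) → ℝ → ℝ)
    (hf : ∀ j, ValidDensity (f j)) (i : Fin (n + 1))
    (A Ai : Fin (n + 1) → Set ℝ)
    (hA : IsMNW f A) (hAi : IsMNWWithout f i Ai) :
    (∏ j ∈ Finset.univ.erase i, cakeval (f j) (A j)) ≤
        (∏ j ∈ Finset.univ.erase i, cakeval (f j) (Ai j)) ∧
      (∏ j ∈ Finset.univ.erase i, cakeval (f j) (Ai j)) ≤
        Real.exp 1 * ∏ j ∈ Finset.univ.erase i, cakeval (f j) (A j) := by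
  refine ⟨hAi.prod_le hA.1, ?_⟩
  have hcard : ((n + 1 : ℕ) : ℝ) - (Finset.univ.erase i).card = 1 := by
    simp [Finset.card_erase_of_mem]
  simpa only [hcard] using hA.prod_le_exp_mul_prod hf hAi.1 (Finset.univ.erase i)
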